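/- arXiv:2001.02586 — 2 statements merged into one kernel-verified Lean document; each statement's English description precedes it below -/
import Mathlib

section
/- Let g : ℤ/Nℤ → ℂ and let h ≥ 2 be an integer. Then N·L(1−h, g) = C_{N,h}^{−1}·L(h, ĝ + (−1)^h·ĝ⁻), and L(1−h, g) = (−1)^h·L(1−h, g⁻). -/
noncomputable section

open Filter Complex

/-- The additive character `x ↦ exp(2πi·x/N)` of `ℤ/Nℤ`. -/
def eChar (N : ℕ) [NeZero N] (x : ZMod N) : ℂ :=
  Complex.exp (2 * (Real.pi : ℂ) * Complex.I * (x.val : ℂ) / (N : ℂ))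

/-- The Fourier transform `ĝ(n) = Σ_{a ∈ ℤ/Nℤ} g(a)·exp(-2πi·a·n/N)` of a function on
`ℤ/Nℤ`. -/
def fhat (N : ℕ) [NeZero N] (g : ZMod N → ℂ) : ZMod N → ℂ :=
  fun n => ∑ a : ZMod N, g a * eChar N (-(a * n))

/-- The constant `C_{N,h} = (-2πi)^h/(N^h·(h-1)!)`. -/
def CN (N : ℕ) (h : ℕ) : ℂ :=
  (-(2 * (Real.pi : ℂ) * Complex.I)) ^ h / ((N : ℂ) ^ h * (Nat.factorial (h - 1) : ℂ))

/-- `L` is the meromorphically continued `L`-function of functions on `ℤ/Nℤ`: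
for each `g`, `L g` agrees with the (absolutely convergent) Dirichlet series
`Σ_{n ≥ 1} g(n mod N)·n^{-s}` on `Re(s) > 1`, is differentiable away from `s = 1`,
and has at most a simple pole at `s = 1` with residue `ĝ(0)/N`. -/
def IsLSeries (N : ℕ) [NeZero N] (L : (ZMod N → ℂ) → ℂ → ℂ) : Prop :=
  (∀ (g : ZMod N → ℂ) (s : ℂ), 1 < s.re →
      HasSum (fun n : ℕ => g ((n + 1 : ℕ) : ZMod N) * ((n + 1 : ℕ) : ℂ) ^ (-s)) (L g s)) ∧
  (∀ (g : ZMod N → ℂ) (s : ℂ), s ≠ 1 → DifferentiableAt ℂ (L g) s) ∧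
  (∀ g : ZMod N → ℂ,
      Tendsto (fun s : ℂ => (s - 1) * L g s) (nhdsWithin 1 {(1 : ℂ)}ᶜ)
        (nhds (fhat N g 0 / (N : ℂ))))

/-! Both `L`-values are identified with Mathlib's `ZMod.LFunction` by the identity theorem on the
connected set `ℂ ∖ {1}`, since they agree with the Dirichlet series on `Re s > 1`. The first claim is
then the functional equation `ZMod.LFunction_one_sub` at `s = h`, where `Γ(h) = (h - 1)!` and
`exp(±πih/2) = (±i)^h`. For the second, `x ↦ -x` swaps the two Fourier transforms occurring in the
functional equation, which trades `i^h` for `(-i)^h = (-1)^h i^h`. -/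

open ZMod
open scoped Nat Real

lemma exp_pi_mul_I_mul_natCast_div_two (n : ℕ) : cexp (π * I * n / 2) = I ^ n := by
  rw [show (π : ℂ) * I * n / 2 = n * (π / 2 * I) by ring, exp_nat_mul, exp_pi_div_two_mul_I]

lemma exp_neg_pi_mul_I_mul_natCast_div_two (n : ℕ) : cexp (-π * I * n / 2) = (-I) ^ n := by
  rw [show -(π : ℂ) * I * n / 2 = n * (-π / 2 * I) by ring, exp_nat_mul,
    exp_neg_pi_div_two_mul_I]

section

variable {N : ℕ} [NeZero N]

lemma eChar_eq_stdAddChar (x : ZMod N) : eChar N x = stdAddChar x := by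
  conv_rhs => rw [← natCast_zmod_val x]
  rw [← Int.cast_natCast, stdAddChar_coe, eChar]
  push_cast
  ring_nf

lemma fhat_eq_dft (g : ZMod N → ℂ) : fhat N g = 𝓕 g := by
  ext k
  simp only [fhat, dft_apply, eChar_eq_stdAddChar, smul_eq_mul, mul_comm]

lemma ZMod.LFunction_add_mul (Φ Ψ : ZMod N → ℂ) (c s : ℂ) :
    LFunction (fun x => Φ x + c * Ψ x) s = LFunction Φ s + c * LFunction Ψ s := by
  simp only [LFunction, add_mul, Finset.sum_add_distrib, mul_add, Finset.mul_sum, mul_assoc,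
    mul_left_comm c]

lemma ZMod.eq_LFunction_of_hasSum (Φ : ZMod N → ℂ) {F : ℂ → ℂ}
    (hF : ∀ s : ℂ, 1 < s.re →
      HasSum (fun n : ℕ => Φ ((n + 1 : ℕ) : ZMod N) * ((n + 1 : ℕ) : ℂ) ^ (-s)) (F s))
    (hdiff : ∀ s : ℂ, s ≠ 1 → DifferentiableAt ℂ F s) {s : ℂ} (hs : s ≠ 1) :
    F s = LFunction Φ s := by
  have hU : IsOpen ({1}ᶜ : Set ℂ) := isOpen_compl_singleton
  have hF_an : AnalyticOnNhd ℂ F {1}ᶜ :=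
    DifferentiableOn.analyticOnNhd (fun z hz => (hdiff z hz).differentiableWithinAt) hU
  have hL_an : AnalyticOnNhd ℂ (LFunction Φ) {1}ᶜ :=
    DifferentiableOn.analyticOnNhd
      (fun z hz => (differentiableAt_LFunction Φ z (Or.inl hz)).differentiableWithinAt) hU
  have hconn : IsPreconnected ({1}ᶜ : Set ℂ) :=
    (isConnected_compl_singleton_of_one_lt_rank (by simp) 1).isPreconnected
  have heq : F =ᶠ[nhds 2] LFunction Φ := by
    filter_upwards [(continuous_re.isOpen_preimage _ isOpen_Ioi).mem_nhds
      (show (2 : ℂ) ∈ re ⁻¹' Set.Ioi 1 by norm_num)] with z hz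
    have hsum : LSeriesHasSum (Φ ·) z (F z) := by
      rw [LSeriesHasSum, ← hasSum_nat_add_iff' 1]
      simpa [LSeries.term_of_ne_zero, cpow_neg, div_eq_mul_inv] using hF z hz
    rw [LFunction_eq_LSeries Φ hz, hsum.LSeries_eq]
  exact hF_an.eqOn_of_preconnected_of_eventuallyEq hL_an hconn (by norm_num) heq hs

lemma IsLSeries.apply_eq_LFunction {L : (ZMod N → ℂ) → ℂ → ℂ}
    (hL : IsLSeries N L) (g : ZMod N → ℂ) {s : ℂ} (hs : s ≠ 1) : L g s = LFunction g s :=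
  eq_LFunction_of_hasSum g (hL.1 g) (hL.2.1 g) hs

lemma ZMod.LFunction_one_sub_natCast (Φ : ZMod N → ℂ) {h : ℕ} (hh : 2 ≤ h) :
    LFunction Φ (1 - h) = N ^ (h - 1) * (h - 1)! / (2 * π) ^ h *
      (I ^ h * LFunction (𝓕 Φ) h + (-I) ^ h * LFunction (𝓕 fun x => Φ (-x)) h) := by
  have hs : ∀ n : ℕ, (h : ℂ) ≠ -n := fun n hn => by
    have : ((h + n : ℕ) : ℂ) = 0 := by rw [Nat.cast_add, hn, neg_add_cancel]
    norm_cast at this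
    omega
  have hs' : (h : ℂ) ≠ 1 := by norm_cast; omega
  obtain ⟨k, rfl⟩ : ∃ k, h = k + 1 := ⟨h - 1, by omega⟩
  have hN : (N : ℂ) ^ ((k + 1 : ℕ) - 1 : ℂ) = N ^ k := by
    rw [Nat.cast_succ, add_sub_cancel_right, cpow_natCast]
  have h2π : (2 * (π : ℂ)) ^ (-((k + 1 : ℕ) : ℂ)) = ((2 * (π : ℂ)) ^ (k + 1))⁻¹ := by
    rw [cpow_neg, cpow_natCast]
  have hΓ : Gamma (k + 1 : ℕ) = k ! := by rw [Nat.cast_succ, Gamma_nat_eq_factorial]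
  rw [LFunction_one_sub Φ hs (Or.inr hs'), exp_pi_mul_I_mul_natCast_div_two,
    exp_neg_pi_mul_I_mul_natCast_div_two, hN, h2π, hΓ, Nat.add_sub_cancel, div_eq_mul_inv]
  ring

end

lemma CN_inv (N h : ℕ) : (CN N h)⁻¹ = N ^ h * (h - 1)! * I ^ h / (2 * π) ^ h := by
  have h2πI : (-(2 * π * I) : ℂ) ^ h = (2 * π) ^ h * (-I) ^ h := by rw [← mul_pow]; ring
  have hI : ((-I) ^ h)⁻¹ = I ^ h := by rw [← inv_pow, inv_neg, inv_I, neg_neg]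
  rw [CN, inv_div, h2πI, ← div_div, div_eq_mul_inv _ ((-I) ^ h), hI]
  ring

/-- Let `g : ℤ/Nℤ → ℂ` and `h ≥ 2`.  Then
`N·L(1-h, g) = C_{N,h}⁻¹·L(h, ĝ + (-1)^h·ĝ⁻)` and `L(1-h, g) = (-1)^h·L(1-h, g⁻)`. -/
theorem statement17 (N : ℕ) [NeZero N] (g : ZMod N → ℂ) (h : ℕ) (hh : 2 ≤ h)
    (L : (ZMod N → ℂ) → ℂ → ℂ) (hL : IsLSeries N L) :
    (N : ℂ) * L g (1 - (h : ℂ)) =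
      (CN N h)⁻¹ * L (fun x => fhat N g x + (-1 : ℂ) ^ h * fhat N g (-x)) (h : ℂ) ∧
    L g (1 - (h : ℂ)) = (-1 : ℂ) ^ h * L (fun x => g (-x)) (1 - (h : ℂ)) := by
  have h_one_sub : 1 - (h : ℂ) ≠ 1 := by
    rw [Ne, sub_eq_self, Nat.cast_eq_zero]; omega
  have h_ne : (h : ℂ) ≠ 1 := by norm_cast; omega
  have hfhat : (fun x => fhat N g x + (-1 : ℂ) ^ h * fhat N g (-x))
      = fun x => 𝓕 g x + (-1 : ℂ) ^ h * 𝓕 (fun y => g (-y)) x := by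
    rw [fhat_eq_dft, dft_comp_neg]
  have hneg := LFunction_one_sub_natCast (fun x => g (-x)) hh
  simp only [neg_neg] at hneg
  rw [hL.apply_eq_LFunction _ h_one_sub, hL.apply_eq_LFunction _ h_one_sub,
    hL.apply_eq_LFunction _ h_ne, hfhat, LFunction_add_mul, CN_inv, hneg,
    LFunction_one_sub_natCast g hh]
  set K : ℂ := (h - 1)! / (2 * π) ^ h
  set A := LFunction (𝓕 g) h
  set B := LFunction (𝓕 fun x => g (-x)) h
  have hN : (N : ℂ) * N ^ (h - 1) = N ^ h := mul_pow_sub_one (by omega) _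
  have hI : (-1 : ℂ) ^ h * I ^ h = (-I) ^ h := by rw [← mul_pow, neg_one_mul]
  have hI' : (-1 : ℂ) ^ h * (-I) ^ h = I ^ h := by rw [← mul_pow, neg_one_mul, neg_neg]
  constructor
  · linear_combination K * (I ^ h * A + (-I) ^ h * B) * hN - N ^ h * K * B * hI
  · linear_combination -(N ^ (h - 1) * K * A) * hI' - N ^ (h - 1) * K * B * hI
end
end

section
/- Let g : ℤ/Nℤ → ℂ and let h ≥ 3 be an integer. Then C_{N,h−1}^{−1}·L(h−1, g) = (−1/(2πi))·L'(2−h, ĝ⁻ + (−1)^h·ĝ) + (1/2)·L(2−h, ĝ⁻), where L'(s₀, ·) denotes the derivative at s = s₀ of the analytic continuation of the L-function. -/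
noncomputable section

open Filter Complex

open Set Finset
open scoped Real Topology

namespace Statement19Aux

lemma fhat_eq (N : ℕ) [NeZero N] (g : ZMod N → ℂ) : fhat N g = ZMod.dft g := by
  funext n
  rw [ZMod.dft_apply, fhat]
  congr 1 with a
  rw [ZMod.stdAddChar_apply, ZMod.toCircle_apply, smul_eq_mul, mul_comm]
  rfl

lemma fhat_neg (N : ℕ) [NeZero N] (g : ZMod N → ℂ) (x : ZMod N) :
    fhat N g (-x) = fhat N (fun j => g (-j)) x := by
  rw [fhat_eq, fhat_eq, ZMod.dft_apply, ZMod.dft_apply]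
  exact Fintype.sum_equiv (Equiv.neg _) _ _ (fun j => by simp [Equiv.neg_apply])

lemma L_eq_LFunction {N : ℕ} [NeZero N] (L : (ZMod N → ℂ) → ℂ → ℂ)
    (h1 : ∀ (g : ZMod N → ℂ) (s : ℂ), 1 < s.re →
      HasSum (fun n : ℕ => g ((n + 1 : ℕ) : ZMod N) * ((n + 1 : ℕ) : ℂ) ^ (-s)) (L g s))
    (h2 : ∀ (g : ZMod N → ℂ) (s : ℂ), s ≠ 1 → DifferentiableAt ℂ (L g) s)
    (g : ZMod N → ℂ) {s : ℂ} (hs : s ≠ 1) : L g s = ZMod.LFunction g s := by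
  let U : Set ℂ := {(1 : ℂ)}ᶜ
  have hUo : IsOpen U := isOpen_compl_singleton
  have hUc : IsPreconnected U :=
    (isConnected_compl_singleton_of_one_lt_rank (by simp) (1 : ℂ)).isPreconnected
  have hf : AnalyticOnNhd ℂ (L g) U :=
    DifferentiableOn.analyticOnNhd (fun u hu => (h2 g u hu).differentiableWithinAt) hUo
  have hg : AnalyticOnNhd ℂ (ZMod.LFunction g) U :=
    DifferentiableOn.analyticOnNhd
      (fun u hu => (ZMod.differentiableAt_LFunction g u (Or.inl hu)).differentiableWithinAt) hUo
  have hUmem : (2 : ℂ) ∈ U := by norm_num [U]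
  have hV : {z : ℂ | 1 < z.re} ∈ nhds (2 : ℂ) :=
    (continuous_re.isOpen_preimage _ isOpen_Ioi).mem_nhds (by simp)
  have key : ∀ z : ℂ, 1 < z.re → L g z = ZMod.LFunction g z := by
    intro z hz
    have hsum : HasSum (fun n : ℕ => LSeries.term (g ·) z (n + 1)) (L g z) := by
      refine (h1 g z hz).congr_fun fun n => ?_
      rw [LSeries.term_of_ne_zero (Nat.succ_ne_zero n), cpow_neg, div_eq_mul_inv]
    have hsum' : HasSum (LSeries.term (g ·) z)
        (L g z + ∑ i ∈ Finset.range 1, LSeries.term (g ·) z i) :=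
      (hasSum_nat_add_iff 1).mp hsum
    rw [ZMod.LFunction_eq_LSeries g hz, LSeries, hsum'.tsum_eq]
    simp [LSeries.term_zero]
  refine hf.eqOn_of_preconnected_of_eventuallyEq hg hUc hUmem ?_ hs
  filter_upwards [hV] with z hz using key z hz

lemma Gamma_aux (k : ℕ) : ∀ s : ℂ, (∀ j : ℕ, j ≤ k → s ≠ -j) →
    Complex.Gamma s = Complex.Gamma (s + k + 1) / ∏ j ∈ Finset.range (k + 1), (s + j) := by
  induction k with
  | zero =>
    intro s hs
    have h0 : s ≠ 0 := by simpa using hs 0 le_rfl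
    rw [show ((0:ℕ):ℂ) = 0 by norm_num]
    rw [add_zero, Complex.Gamma_add_one s h0]
    rw [Finset.prod_range_one]
    rw [show ((0:ℕ):ℂ) = 0 by norm_num, add_zero]
    field_simp
  | succ k ih =>
    intro s hs
    have hne : s + k + 1 ≠ 0 := by
      have := hs (k + 1) le_rfl
      intro hc
      apply this
      push_cast
      linear_combination hc
    have hG : Complex.Gamma (s + (k + 1 : ℕ) + 1) = (s + k + 1) * Complex.Gamma (s + k + 1) := by
      rw [← Complex.Gamma_add_one (s + k + 1) hne]
      congr 1
      push_cast
      ring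
    rw [hG, Finset.prod_range_succ, show s + ((k + 1 : ℕ) : ℂ) = s + k + 1 by push_cast; ring,
      mul_comm (∏ j ∈ Finset.range (k + 1), (s + j)) (s + (k : ℂ) + 1),
      mul_div_mul_left _ _ hne]
    exact ih s (fun j hj => hs j (hj.trans (Nat.le_succ k)))

lemma prod_range_neg_add (k : ℕ) :
    ∏ j ∈ Finset.range k, (-(k : ℂ) + j) = (-1) ^ k * (Nat.factorial k : ℂ) := by
  have h1 : ∀ j ∈ Finset.range k, (-(k : ℂ) + j) = -1 * (((k - j : ℕ) : ℂ)) := by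
    intro j hj
    rw [Finset.mem_range] at hj
    push_cast [Nat.cast_sub hj.le]
    ring
  rw [Finset.prod_congr rfl h1, Finset.prod_mul_distrib, Finset.prod_const, Finset.card_range]
  congr 1
  rw [← Nat.cast_prod]
  congr 1
  calc ∏ j ∈ Finset.range k, (k - j) = ∏ j ∈ Finset.range k, ((fun i => i + 1) (k - 1 - j)) := by
        refine Finset.prod_congr rfl fun j hj => ?_
        rw [Finset.mem_range] at hj
        show k - j = (k - 1 - j) + 1
        omega
    _ = ∏ j ∈ Finset.range k, (j + 1) := Finset.prod_range_reflect _ _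
    _ = k.factorial := Finset.prod_range_add_one_eq_factorial k

lemma Gamma_residue (k : ℕ) :
    Tendsto (fun s : ℂ => (s + k) * Complex.Gamma s) (𝓝[≠] (-(k : ℂ)))
      (𝓝 ((-1) ^ k / (Nat.factorial k : ℂ))) := by
  have hfact : ((Nat.factorial k : ℂ)) ≠ 0 := Nat.cast_ne_zero.mpr k.factorial_ne_zero
  have hpow : ((-1 : ℂ)) ^ k ≠ 0 := pow_ne_zero _ (by norm_num)
  have hden : (∏ j ∈ Finset.range k, (-(k : ℂ) + j)) ≠ 0 := by
    rw [prod_range_neg_add]; exact mul_ne_zero hpow hfact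
  set G : ℂ → ℂ := fun s => Complex.Gamma (s + k + 1) / ∏ j ∈ Finset.range k, (s + j) with hG
  have h1 : ContinuousAt Complex.Gamma 1 := by
    refine (Complex.differentiableAt_Gamma 1 (fun m => ?_)).continuousAt
    intro hc
    have := congrArg Complex.re hc
    simp only [Complex.one_re, Complex.neg_re, Complex.natCast_re] at this
    linarith [Nat.cast_nonneg (α := ℝ) m]
  have hcont : ContinuousAt G (-(k : ℂ)) := by
    refine ContinuousAt.div ?_ (by fun_prop) hden
    show ContinuousAt (Complex.Gamma ∘ (fun s : ℂ => s + k + 1)) (-(k : ℂ))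
    refine ContinuousAt.comp ?_ (by fun_prop)
    rw [show (-(k : ℂ) + k + 1) = 1 by ring]
    exact h1
  have hGval : G (-(k : ℂ)) = (-1) ^ k / (Nat.factorial k : ℂ) := by
    rw [hG]
    simp only
    rw [show (-(k : ℂ) + k + 1) = 1 by ring, Complex.Gamma_one, prod_range_neg_add]
    rw [div_eq_div_iff (mul_ne_zero hpow hfact) hfact, one_mul, ← mul_assoc, ← mul_pow]
    norm_num
  have hev : ∀ᶠ s in 𝓝[≠] (-(k : ℂ)), (s + k) * Complex.Gamma s = G s := by
    filter_upwards [self_mem_nhdsWithin,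
      mem_nhdsWithin_of_mem_nhds (Metric.ball_mem_nhds _ (by norm_num : (0:ℝ) < 1/2))]
      with s hs hball
    have havoid : ∀ j : ℕ, j ≤ k → s ≠ -j := by
      intro j hj hc
      rcases eq_or_ne j k with rfl | hjk
      · exact hs (by rw [hc]; exact Set.mem_singleton _)
      · rw [Metric.mem_ball, hc, Complex.dist_eq] at hball
        have hcast : (-(j:ℂ) - -(k:ℂ)) = (((k:ℝ) - j : ℝ) : ℂ) := by push_cast; ring
        rw [hcast, Complex.norm_real, Real.norm_eq_abs] at hball
        have hge : (1:ℝ) ≤ |((k:ℝ) - (j:ℝ))| := by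
          have hne : ((k:ℤ) - (j:ℤ)) ≠ 0 := by
            intro hz; exact hjk (by omega)
          calc (1:ℝ) ≤ |(((k:ℤ) - j : ℤ) : ℝ)| := by exact_mod_cast Int.one_le_abs hne
          _ = |((k:ℝ) - (j:ℝ))| := by norm_num
        linarith
    have hsk : s + (k:ℂ) ≠ 0 := fun hz => havoid k le_rfl (by linear_combination hz)
    rw [hG]
    simp only
    rw [Gamma_aux k s havoid, Finset.prod_range_succ, mul_comm
      (∏ j ∈ Finset.range k, (s + j)) (s + (k:ℂ)), ← div_div]
    field_simp
  have T : Tendsto G (𝓝[≠] (-(k:ℂ))) (𝓝 ((-1) ^ k / (Nat.factorial k : ℂ))) := by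
    rw [← hGval]
    exact hcont.tendsto.mono_left nhdsWithin_le_nhds
  exact T.congr' (EventuallyEq.symm hev)


lemma exp_pi_I_div_two : Complex.exp (↑π * I / 2) = I := by
  rw [show (↑π * I / 2 : ℂ) = (↑(π / 2) : ℂ) * I by push_cast; ring, Complex.exp_mul_I,
    ← Complex.ofReal_cos, ← Complex.ofReal_sin, Real.cos_pi_div_two, Real.sin_pi_div_two]
  simp

lemma exp_neg_pi_I_div_two : Complex.exp (-(↑π * I / 2)) = -I := by
  rw [Complex.exp_neg, exp_pi_I_div_two, inv_I]

lemma Eval1 (h : ℕ) : Complex.exp (↑π * I * (2 - (h : ℂ)) / 2) = -((-1 : ℂ) ^ h * I ^ h) := by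
  rw [show (↑π * I * (2 - (h : ℂ)) / 2 : ℂ) = ↑π * I + (h : ℕ) * (-(↑π * I / 2)) by push_cast; ring,
    Complex.exp_add, Complex.exp_nat_mul, Complex.exp_pi_mul_I, exp_neg_pi_I_div_two, neg_pow]
  ring

lemma Eval2 (h : ℕ) : Complex.exp (-↑π * I * (2 - (h : ℂ)) / 2) = -(I : ℂ) ^ h := by
  rw [show (-↑π * I * (2 - (h : ℂ)) / 2 : ℂ) = -(↑π * I) + (h : ℕ) * (↑π * I / 2) by
      push_cast; ring,
    Complex.exp_add, Complex.exp_nat_mul, Complex.exp_neg, Complex.exp_pi_mul_I, exp_pi_I_div_two]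
  norm_num

lemma LFunction_add_smul {N : ℕ} [NeZero N] (Φ Ψ : ZMod N → ℂ) (c : ℂ) (s : ℂ) :
    ZMod.LFunction (fun x => Φ x + c * Ψ x) s
      = ZMod.LFunction Φ s + c * ZMod.LFunction Ψ s := by
  simp only [ZMod.LFunction, add_mul, Finset.sum_add_distrib, mul_add]
  simp only [mul_assoc, ← Finset.mul_sum]
  ring

end Statement19Aux

open Statement19Aux in
set_option maxHeartbeats 1000000 in
/-- Let `g : ℤ/Nℤ → ℂ` and `h ≥ 3`.  Then
`C_{N,h-1}⁻¹·L(h-1, g) = (-1/(2πi))·L'(2-h, ĝ⁻ + (-1)^h·ĝ) + (1/2)·L(2-h, ĝ⁻)`,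
where `L'` is the derivative of the analytic continuation of the `L`-function. -/
theorem statement19 (N : ℕ) [NeZero N] (g : ZMod N → ℂ) (h : ℕ) (hh : 3 ≤ h)
    (L : (ZMod N → ℂ) → ℂ → ℂ) (hL : IsLSeries N L) :
    (CN N (h - 1))⁻¹ * L g ((h : ℂ) - 1) =
      (-1 / (2 * (Real.pi : ℂ) * Complex.I)) *
          deriv (L (fun x => fhat N g (-x) + (-1 : ℂ) ^ h * fhat N g x)) (2 - (h : ℂ)) +
        (1 / 2) * L (fun x => fhat N g (-x)) (2 - (h : ℂ)) := by
  obtain ⟨h1, h2, h3⟩ := hL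
  have hNne : (N : ℂ) ≠ 0 := Nat.cast_ne_zero.mpr (NeZero.ne N)
  set k : ℕ := h - 2 with hk
  have hhk : h = k + 2 := by omega
  have hh1 : ((h : ℂ) - 1) ≠ 1 := by
    intro hc
    have h2' : (h : ℂ) = 2 := by linear_combination hc
    have : h = 2 := by exact_mod_cast h2'
    omega
  have hs₀ne : (2 - (h : ℂ)) ≠ 1 := by
    intro hc
    have h1' : (h : ℂ) = 1 := by linear_combination -hc
    have : h = 1 := by exact_mod_cast h1'
    omega
  -- replace L by the Mathlib LFunction
  rw [L_eq_LFunction L h1 h2 g hh1, L_eq_LFunction L h1 h2 _ hs₀ne]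
  have hderivEq : deriv (L (fun x => fhat N g (-x) + (-1 : ℂ) ^ h * fhat N g x)) (2 - (h : ℂ))
      = deriv (ZMod.LFunction (fun x => fhat N g (-x) + (-1 : ℂ) ^ h * fhat N g x))
          (2 - (h : ℂ)) := by
    apply Filter.EventuallyEq.deriv_eq
    filter_upwards [isOpen_compl_singleton.mem_nhds hs₀ne] with z hz
    exact L_eq_LFunction L h1 h2 _ hz
  rw [hderivEq]
  have hfun2 : (fun x : ZMod N => fhat N g (-x)) = ZMod.dft (fun j => g (-j)) :=
    funext fun x => by rw [fhat_neg, fhat_eq]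
  have hfunsum : (fun x : ZMod N => fhat N g (-x) + (-1 : ℂ) ^ h * fhat N g x)
      = fun x => ZMod.dft (fun j => g (-j)) x + (-1 : ℂ) ^ h * ZMod.dft g x := by
    funext x; rw [fhat_neg, fhat_eq, fhat_eq]
  rw [hfun2, hfunsum]
  set s₀ : ℂ := 2 - (h : ℂ) with hs₀def
  have hs₀k : s₀ = -(k : ℂ) := by rw [hs₀def, hhk]; push_cast; ring
  set L₁ : ℂ → ℂ := ZMod.LFunction (ZMod.dft g) with hL₁
  set L₂ : ℂ → ℂ := ZMod.LFunction (ZMod.dft (fun j => g (-j))) with hL₂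
  have hd1 : DifferentiableAt ℂ L₁ s₀ := ZMod.differentiableAt_LFunction _ _ (Or.inl hs₀ne)
  have hd2 : DifferentiableAt ℂ L₂ s₀ := ZMod.differentiableAt_LFunction _ _ (Or.inl hs₀ne)
  have hLsum : ZMod.LFunction (fun x => ZMod.dft (fun j => g (-j)) x + (-1 : ℂ) ^ h * ZMod.dft g x)
      = fun s => L₂ s + (-1 : ℂ) ^ h * L₁ s :=
    funext fun s => LFunction_add_smul _ _ _ s
  have hderivsum : deriv (ZMod.LFunction
        (fun x => ZMod.dft (fun j => g (-j)) x + (-1 : ℂ) ^ h * ZMod.dft g x)) s₀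
      = deriv L₂ s₀ + (-1 : ℂ) ^ h * deriv L₁ s₀ := by
    rw [hLsum]
    exact (hd2.hasDerivAt.add ((hd1.hasDerivAt).const_mul ((-1 : ℂ) ^ h))).deriv
  rw [hderivsum]
  set E₁ : ℂ := Complex.exp (↑π * I * s₀ / 2) with hE₁
  set E₂ : ℂ := Complex.exp (-↑π * I * s₀ / 2) with hE₂
  set B : ℂ → ℂ := fun s =>
    Complex.exp (↑π * I * s / 2) * L₁ s + Complex.exp (-↑π * I * s / 2) * L₂ s with hBdef
  have he1 : HasDerivAt (fun s : ℂ => Complex.exp (↑π * I * s / 2)) (E₁ * (↑π * I / 2)) s₀ := by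
    have hlin : HasDerivAt (fun s : ℂ => ↑π * I * s / 2) (↑π * I / 2) s₀ := by
      simpa using ((hasDerivAt_id s₀).const_mul (↑π * I : ℂ)).div_const 2
    exact hlin.cexp
  have he2 : HasDerivAt (fun s : ℂ => Complex.exp (-↑π * I * s / 2)) (E₂ * (-↑π * I / 2)) s₀ := by
    have hlin : HasDerivAt (fun s : ℂ => -↑π * I * s / 2) (-↑π * I / 2) s₀ := by
      simpa using ((hasDerivAt_id s₀).const_mul (-↑π * I : ℂ)).div_const 2
    exact hlin.cexp
  have hBd : HasDerivAt B ((E₁ * (↑π * I / 2)) * L₁ s₀ + E₁ * deriv L₁ s₀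
      + ((E₂ * (-↑π * I / 2)) * L₂ s₀ + E₂ * deriv L₂ s₀)) s₀ :=
    (he1.mul hd1.hasDerivAt).add (he2.mul hd2.hasDerivAt)
  -- functional equation, eventually near s₀
  have hFE : ∀ᶠ s in 𝓝[≠] s₀, ZMod.LFunction g (1 - s)
      = ↑N ^ (s - 1) * (2 * ↑π) ^ (-s) * Complex.Gamma s * B s := by
    filter_upwards [self_mem_nhdsWithin,
      mem_nhdsWithin_of_mem_nhds (Metric.ball_mem_nhds s₀ (by norm_num : (0:ℝ) < 1/2))]
      with s hs hball
    have havoid : ∀ n : ℕ, s ≠ -(n : ℂ) := by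
      intro n hc
      have hnk : n ≠ k := by
        intro he
        exact hs (by rw [Set.mem_singleton_iff, hc, he, ← hs₀k])
      rw [Metric.mem_ball, hc, hs₀k, Complex.dist_eq] at hball
      have hcast : (-(n:ℂ) - -(k:ℂ)) = (((k:ℝ) - (n:ℝ) : ℝ) : ℂ) := by push_cast; ring
      rw [hcast, Complex.norm_real, Real.norm_eq_abs] at hball
      have hge : (1:ℝ) ≤ |((k:ℝ) - (n:ℝ))| := by
        have hne : ((k:ℤ) - (n:ℤ)) ≠ 0 := by
          intro hz
          exact hnk (by omega)
        calc (1:ℝ) ≤ |(((k:ℤ) - (n:ℤ) : ℤ) : ℝ)| := by exact_mod_cast Int.one_le_abs hne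
        _ = |((k:ℝ) - (n:ℝ))| := by norm_num
      linarith
    have hs1 : s ≠ 1 := by
      intro hc
      rw [Metric.mem_ball, hc, hs₀k, Complex.dist_eq] at hball
      have hcast : ((1:ℂ) - -(k:ℂ)) = ((1 + (k:ℝ) : ℝ) : ℂ) := by push_cast; ring
      rw [hcast, Complex.norm_real, Real.norm_eq_abs] at hball
      have hk0 : (0:ℝ) ≤ (k:ℝ) := Nat.cast_nonneg k
      rw [_root_.abs_of_nonneg (by linarith)] at hball
      linarith
    rw [ZMod.LFunction_one_sub g havoid (Or.inr hs1)]
  have hT1 : Tendsto (fun s => ZMod.LFunction g (1 - s)) (𝓝[≠] s₀)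
      (𝓝 (ZMod.LFunction g ((h:ℂ) - 1))) := by
    have hmap : Tendsto (fun s : ℂ => 1 - s) (𝓝 s₀) (𝓝 ((h:ℂ) - 1)) :=
      (continuous_const.sub continuous_id).tendsto' s₀ _ (by show (1:ℂ) - s₀ = _; rw [hs₀def]; ring)
    exact (((ZMod.differentiableAt_LFunction g _ (Or.inl hh1)).continuousAt.tendsto).comp
      hmap).mono_left nhdsWithin_le_nhds
  have hT2 : Tendsto (fun s => ↑N ^ (s - 1) * (2 * ↑π) ^ (-s) * Complex.Gamma s * B s)
      (𝓝[≠] s₀) (𝓝 (ZMod.LFunction g ((h:ℂ) - 1))) := hT1.congr' hFE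
  have hcN : Continuous (fun s : ℂ => (N:ℂ) ^ (s - 1)) :=
    (continuous_id.sub continuous_const).const_cpow (Or.inl hNne)
  have h2πne : ((2:ℂ) * ↑π) ≠ 0 := by
    have hcast : ((2:ℂ) * ↑π) = ((2 * π : ℝ) : ℂ) := by push_cast; ring
    rw [hcast, Ne, Complex.ofReal_eq_zero]
    positivity
  have hcP : Continuous (fun s : ℂ => ((2:ℂ) * ↑π) ^ (-s)) :=
    continuous_neg.const_cpow (Or.inl h2πne)
  have hGam : Tendsto (fun s : ℂ => (s - s₀) * Complex.Gamma s) (𝓝[≠] s₀)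
      (𝓝 ((-1)^k / (k.factorial : ℂ))) := by
    rw [hs₀k]
    simpa [sub_neg_eq_add] using Gamma_residue k
  have hBcont : ContinuousAt B s₀ := hBd.differentiableAt.continuousAt
  have hfactne : ((k.factorial : ℂ)) ≠ 0 := Nat.cast_ne_zero.mpr k.factorial_ne_zero
  have hTzero : Tendsto (fun s : ℂ =>
      (s - s₀) * (↑N ^ (s - 1) * (2 * ↑π) ^ (-s) * Complex.Gamma s * B s)) (𝓝[≠] s₀) (𝓝 0) := by
    have hsub : Tendsto (fun s : ℂ => s - s₀) (𝓝[≠] s₀) (𝓝 0) :=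
      ((continuous_sub_right s₀).tendsto' s₀ 0 (by simp)).mono_left nhdsWithin_le_nhds
    simpa using hsub.mul hT2
  have hB0 : B s₀ = 0 := by
    have heq : (↑N ^ (s₀ - 1) * (2 * ↑π) ^ (-s₀)) * ((-1)^k / (k.factorial : ℂ)) * B s₀ = 0 := by
      refine tendsto_nhds_unique ?_ hTzero
      have hp : Tendsto (fun s : ℂ => (↑N ^ (s - 1) * (2 * ↑π) ^ (-s)) * ((s - s₀) * Complex.Gamma s) * B s)
          (𝓝[≠] s₀)
          (𝓝 ((↑N ^ (s₀ - 1) * (2 * ↑π) ^ (-s₀)) * ((-1)^k / (k.factorial : ℂ)) * B s₀)) :=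
        ((((hcN.mul hcP).tendsto s₀).mono_left nhdsWithin_le_nhds).mul hGam).mul
          (hBcont.tendsto.mono_left nhdsWithin_le_nhds)
      exact hp.congr (fun s => by ring)
    have hne1 : (↑N : ℂ) ^ (s₀ - 1) ≠ 0 := by
      simp [Complex.cpow_eq_zero_iff, hNne]
    have hne2 : ((2:ℂ) * ↑π) ^ (-s₀) ≠ 0 := by
      simp [Complex.cpow_eq_zero_iff, h2πne]
    have hne3 : ((-1:ℂ))^k / (k.factorial : ℂ) ≠ 0 :=
      div_ne_zero (pow_ne_zero _ (by norm_num)) hfactne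
    by_contra hB
    exact (mul_ne_zero (mul_ne_zero (mul_ne_zero hne1 hne2) hne3) hB) heq
  have hslope : Tendsto (fun s => (B s - B s₀) / (s - s₀)) (𝓝[≠] s₀) (𝓝 (deriv B s₀)) := by
    have := hasDerivAt_iff_tendsto_slope.mp (hBd.differentiableAt.hasDerivAt)
    refine this.congr (fun s => ?_)
    rw [slope_def_field]
  have hFE2 : ∀ᶠ s in 𝓝[≠] s₀,
      (↑N ^ (s - 1) * (2 * ↑π) ^ (-s)) * ((s - s₀) * Complex.Gamma s)
        * ((B s - B s₀) / (s - s₀))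
      = ↑N ^ (s - 1) * (2 * ↑π) ^ (-s) * Complex.Gamma s * B s := by
    filter_upwards [self_mem_nhdsWithin] with s hs
    have hne : s - s₀ ≠ 0 := sub_ne_zero.mpr hs
    rw [hB0, sub_zero]
    field_simp
  have hT3 : Tendsto (fun s => ↑N ^ (s - 1) * (2 * ↑π) ^ (-s) * Complex.Gamma s * B s)
      (𝓝[≠] s₀)
      (𝓝 ((↑N ^ (s₀ - 1) * (2 * ↑π) ^ (-s₀)) * ((-1)^k / (k.factorial : ℂ)) * deriv B s₀)) := by
    refine Tendsto.congr' hFE2 ?_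
    exact ((((hcN.mul hcP).tendsto s₀).mono_left nhdsWithin_le_nhds).mul hGam).mul hslope
  have key : ZMod.LFunction g ((h:ℂ) - 1)
      = (↑N ^ (s₀ - 1) * (2 * ↑π) ^ (-s₀)) * ((-1)^k / (k.factorial : ℂ)) * deriv B s₀ :=
    tendsto_nhds_unique hT2 hT3
  have hDval : deriv B s₀ = (E₁ * (↑π * I / 2)) * L₁ s₀ + E₁ * deriv L₁ s₀
      + ((E₂ * (-↑π * I / 2)) * L₂ s₀ + E₂ * deriv L₂ s₀) := hBd.deriv
  have hB0' : E₁ * L₁ s₀ + E₂ * L₂ s₀ = 0 := by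
    have hx := hB0
    rw [hBdef] at hx
    simp only [] at hx
    rw [← hE₁, ← hE₂] at hx
    exact hx
  have hmh : (-1:ℂ)^h = (-1)^k := by
    rw [hhk, pow_add]; norm_num
  have hIh : (I:ℂ)^h = -(I:ℂ)^k := by
    rw [hhk, pow_add, I_sq]; ring
  have hE1v : E₁ = (-1:ℂ)^k * (I:ℂ)^k := by
    rw [hE₁, hs₀def, Eval1 h, hmh, hIh]
    ring
  have hE2v : E₂ = (I:ℂ)^k := by
    rw [hE₂, hs₀def, Eval2 h, hIh]
    ring
  have hcpow1 : (↑N : ℂ) ^ (s₀ - 1) = ((N:ℂ) ^ (h - 1 : ℕ))⁻¹ := by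
    have hexp : s₀ - 1 = -(((h - 1 : ℕ) : ℂ)) := by
      have h1le : 1 ≤ h := by omega
      rw [hs₀def, Nat.cast_sub h1le]
      push_cast
      ring
    rw [hexp, Complex.cpow_neg, Complex.cpow_natCast]
  have hcpow2 : ((2:ℂ) * ↑π) ^ (-s₀) = ((2:ℂ) * ↑π) ^ (k : ℕ) := by
    have hexp : -s₀ = ((k : ℕ) : ℂ) := by rw [hs₀k]; ring
    rw [hexp, Complex.cpow_natCast]
  have hCNv : CN N (h - 1) = ((-1:ℂ)^k * ((2:ℂ) * ↑π)^k * (I:ℂ)^k * (-(2 * ↑π * I)))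
      / ((N:ℂ) ^ (h - 1 : ℕ) * (k.factorial : ℂ)) := by
    rw [CN, show h - 1 - 1 = k from by omega, show h - 1 = k + 1 from by omega, pow_succ,
      neg_pow, mul_pow]
    ring
  have hNpowne : ((N:ℂ) ^ (h - 1 : ℕ)) ≠ 0 := pow_ne_zero _ hNne
  have hIkne : ((I:ℂ)^k) ≠ 0 := pow_ne_zero _ I_ne_zero
  rw [key, hDval, hE1v, hE2v, hcpow1, hcpow2, hCNv, hmh]
  have hB0'' : (-1:ℂ)^k * (I:ℂ)^k * L₁ s₀ + (I:ℂ)^k * L₂ s₀ = 0 := by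
    rw [← hE1v, ← hE2v]; exact hB0'
  have hπ : ((π : ℝ) : ℂ) ≠ 0 := Complex.ofReal_ne_zero.mpr Real.pi_ne_zero
  rcases Nat.even_or_odd k with hpar | hpar
  · have hM : (-1:ℂ)^k = 1 := hpar.neg_one_pow
    rw [hM] at hB0'' ⊢
    have hsum0 : (I:ℂ)^k * (L₁ s₀ + L₂ s₀) = 0 := by linear_combination hB0''
    have ha : L₁ s₀ = -L₂ s₀ := by
      have h0 := (mul_eq_zero.mp hsum0).resolve_left hIkne
      linear_combination h0
    rw [ha]
    field_simp [hNpowne, hfactne, h2πne, hIkne, hπ]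
    ring
  · have hM : (-1:ℂ)^k = -1 := hpar.neg_one_pow
    rw [hM] at hB0'' ⊢
    have hsum0 : (I:ℂ)^k * (L₂ s₀ - L₁ s₀) = 0 := by linear_combination hB0''
    have ha : L₁ s₀ = L₂ s₀ := by
      have h0 := (mul_eq_zero.mp hsum0).resolve_left hIkne
      linear_combination -h0
    rw [ha]
    field_simp [hNpowne, hfactne, h2πne, hIkne, hπ]
    ring
end
end
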